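/- arXiv:2412.01886 — 5 statements merged into one kernel-verified Lean document; each statement's English description precedes it below -/
import Mathlib

section
/- Let S be a finite set and A a finite (not necessarily abelian) group. Let E be the free abelian group of functions ε : S × A → ℤ, and let E_inv ⊆ E be a subgroup each of whose elements ε satisfies Σ_{a∈A} ε(s,a) = 0 for every s ∈ S. Let E_id ⊆ E_inv be a subgroup such that for every ε ∈ E_inv and every a′ ∈ A the difference ε − ε^{a′} lies in E_id, where ε^{a′}(s,a) := ε(s, a·a′⁻¹) is the right-translation shift. Then the quotient T := E_inv / E_id is a finite abelian group, and every element of T has order dividing |A|. -/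
/-- Let `S` be a finite set and `A` a finite (not necessarily abelian)
group.  Inside the free abelian group `E` of functions `ε : S × A → ℤ`, take a subgroup
`E_inv` all of whose elements satisfy `∑ a, ε (s, a) = 0` for every `s`, and a subgroup
`E_id ≤ E_inv` containing every right-translation difference `ε - ε^{a'}` (where
`ε^{a'} (s, a) = ε (s, a * a'⁻¹)`) for `ε ∈ E_inv`.  Then the quotient `T = E_inv / E_id`
is a finite abelian group and every element of `T` has order dividing `|A|`. -/
theorem quotient_finite_and_order_dvd_card_nonabelian
    {S A : Type*} [Fintype S] [Fintype A] [Group A]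
    (Einv Eid : AddSubgroup (S × A → ℤ))
    (hEinv : ∀ ε ∈ Einv, ∀ s : S, ∑ a : A, ε (s, a) = 0)
    (hle : Eid ≤ Einv)
    (hshift : ∀ ε ∈ Einv, ∀ a' : A,
      (ε - fun p : S × A => ε (p.1, p.2 * a'⁻¹)) ∈ Eid) :
    Finite (Einv ⧸ Eid.addSubgroupOf Einv) ∧
      ∀ x : Einv ⧸ Eid.addSubgroupOf Einv, addOrderOf x ∣ Fintype.card A := by
  set n := Fintype.card A with hn
  have hnpos : 0 < n := Fintype.card_pos
  -- key: n • ε ∈ Eid for ε ∈ Einv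
  have key : ∀ ε ∈ Einv, n • ε ∈ Eid := by
    intro ε hε
    have hsum : (∑ a' : A, (ε - fun p : S × A => ε (p.1, p.2 * a'⁻¹))) = n • ε := by
      funext p
      simp only [Finset.sum_apply, Pi.sub_apply, Finset.sum_sub_distrib,
        Finset.sum_const, Finset.card_univ, Pi.smul_apply]
      have hbij : ∑ a' : A, ε (p.1, p.2 * a'⁻¹) = ∑ a : A, ε (p.1, a) := by
        apply Finset.sum_nbij' (fun a' => p.2 * a'⁻¹) (fun a => (p.2⁻¹ * a)⁻¹) <;>
          intros <;> simp [mul_assoc]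
      rw [hbij, hEinv ε hε p.1, sub_zero, hn]
    rw [← hsum]
    exact AddSubgroup.sum_mem _ fun a' _ => hshift ε hε a'
  have hzero : ∀ x : Einv ⧸ Eid.addSubgroupOf Einv, n • x = 0 := by
    intro x
    induction x using QuotientAddGroup.induction_on with
    | H ε =>
      rw [← QuotientAddGroup.mk_nsmul, QuotientAddGroup.eq_zero_iff]
      exact key ε.1 ε.2
  refine ⟨?_, fun x => addOrderOf_dvd_of_nsmul_eq_zero (hzero x)⟩
  -- finiteness
  have : Module.Finite ℤ (Einv : Set (S × A → ℤ)) := by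
    have : Module.Finite ℤ (AddSubgroup.toIntSubmodule Einv) :=
      Module.Finite.iff_fg.mpr (IsNoetherian.noetherian _)
    exact this
  have hfg : AddGroup.FG Einv := Module.Finite.iff_addGroup_fg.mp this
  have hfgq : AddGroup.FG (Einv ⧸ Eid.addSubgroupOf Einv) :=
    AddGroup.fg_of_surjective (f := QuotientAddGroup.mk' _)
      (QuotientAddGroup.mk'_surjective _)
  exact AddCommGroup.finite_of_fg_torsion _ fun x =>
    (isOfFinAddOrder_iff_nsmul_eq_zero).mpr ⟨n, hnpos, hzero x⟩
end

section
/- Let C be the group of even-cardinality subsets of {0,1,2,3} under symmetric difference Δ, let e_i := {0,i} for i ∈ {1,2,3}, and let θ : {1,2,3} × C → ℝ, written θ_i(a). For distinct i,j ∈ {1,2,3} and a ∈ C define K_{ij}(a) := θ_j(a) + θ_i(a Δ e_j) − θ_j(a Δ e_i) − θ_i(a). Assume that for all distinct i,j ∈ {1,2,3}, all distinct k,l ∈ {1,2,3}, and all a ∈ C, K_{ij}(a Δ {k,l}) ≡ K_{ij}(a) (mod 2π). Then 4·Θ ≡ 0 (mod 2π), where Θ := θ_3({0,2}) − θ_2({0,3})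 + θ_1({0,3}) − θ_3({0,1}) + θ_2({0,1}) − θ_1({0,2}). In particular exp(iΘ) is a fourth root of unity. -/
/-- The even-cardinality subsets of `{0,1,2,3}` (the paper's configuration group `C`
under symmetric difference): membership predicate for `Finset (Fin 4)`. -/
def IsEvenConfig (a : Finset (Fin 4)) : Prop := Even a.card

/-- The commutator phase `K_{ij}(a) = θ_j(a) + θ_i(a Δ e_j) − θ_j(a Δ e_i) − θ_i(a)`,
where `e_i = {0, i}`. -/
noncomputable def commPhase (θ : Fin 4 → Finset (Fin 4) → ℝ) (i j : Fin 4)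
    (a : Finset (Fin 4)) : ℝ :=
  θ j a + θ i (symmDiff a {0, j}) - θ j (symmDiff a {0, i}) - θ i a

/-- If for all distinct `i, j ∈ {1,2,3}`, all distinct `k, l ∈ {1,2,3}`
and all even-cardinality `a ⊆ {0,1,2,3}` one has
`K_{ij}(a Δ {k,l}) ≡ K_{ij}(a) (mod 2π)`, then the T-junction phase
`Θ = θ₃({0,2}) − θ₂({0,3}) + θ₁({0,3}) − θ₃({0,1}) + θ₂({0,1}) − θ₁({0,2})`
satisfies `4·Θ ≡ 0 (mod 2π)`. -/
theorem tjunction_phase_quantized (θ : Fin 4 → Finset (Fin 4) → ℝ)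
    (hloc : ∀ i j k l : Fin 4, i ≠ 0 → j ≠ 0 → i ≠ j → k ≠ 0 → l ≠ 0 → k ≠ l →
      ∀ a : Finset (Fin 4), IsEvenConfig a →
        ∃ z : ℤ, commPhase θ i j (symmDiff a {k, l}) - commPhase θ i j a
          = 2 * Real.pi * z) :
    ∃ z : ℤ,
      4 * (θ 3 {0, 2} - θ 2 {0, 3} + θ 1 {0, 3} - θ 3 {0, 1} + θ 2 {0, 1} - θ 1 {0, 2})
        = 2 * Real.pi * z := by
  have sd0 : symmDiff (∅ : Finset (Fin 4)) ({0, 1} : Finset (Fin 4)) = ({0, 1} : Finset (Fin 4)) := by decide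
  have sd1 : symmDiff (∅ : Finset (Fin 4)) ({0, 2} : Finset (Fin 4)) = ({0, 2} : Finset (Fin 4)) := by decide
  have sd2 : symmDiff (∅ : Finset (Fin 4)) ({0, 3} : Finset (Fin 4)) = ({0, 3} : Finset (Fin 4)) := by decide
  have sd3 : symmDiff (∅ : Finset (Fin 4)) ({1, 2} : Finset (Fin 4)) = ({1, 2} : Finset (Fin 4)) := by decide
  have sd4 : symmDiff (∅ : Finset (Fin 4)) ({1, 3} : Finset (Fin 4)) = ({1, 3} : Finset (Fin 4)) := by decide
  have sd5 : symmDiff ({0, 1} : Finset (Fin 4)) ({0, 1} : Finset (Fin 4)) = (∅ : Finset (Fin 4)) := by decide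
  have sd6 : symmDiff ({0, 1} : Finset (Fin 4)) ({0, 2} : Finset (Fin 4)) = ({1, 2} : Finset (Fin 4)) := by decide
  have sd7 : symmDiff ({0, 1} : Finset (Fin 4)) ({1, 2} : Finset (Fin 4)) = ({0, 2} : Finset (Fin 4)) := by decide
  have sd8 : symmDiff ({0, 1, 2, 3} : Finset (Fin 4)) ({0, 1} : Finset (Fin 4)) = ({2, 3} : Finset (Fin 4)) := by decide
  have sd9 : symmDiff ({0, 1, 2, 3} : Finset (Fin 4)) ({0, 2} : Finset (Fin 4)) = ({1, 3} : Finset (Fin 4)) := by decide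
  have sd10 : symmDiff ({0, 1, 2, 3} : Finset (Fin 4)) ({0, 3} : Finset (Fin 4)) = ({1, 2} : Finset (Fin 4)) := by decide
  have sd11 : symmDiff ({0, 2} : Finset (Fin 4)) ({0, 1} : Finset (Fin 4)) = ({1, 2} : Finset (Fin 4)) := by decide
  have sd12 : symmDiff ({0, 2} : Finset (Fin 4)) ({0, 2} : Finset (Fin 4)) = (∅ : Finset (Fin 4)) := by decide
  have sd13 : symmDiff ({0, 3} : Finset (Fin 4)) ({0, 1} : Finset (Fin 4)) = ({1, 3} : Finset (Fin 4)) := by decide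
  have sd14 : symmDiff ({0, 3} : Finset (Fin 4)) ({0, 2} : Finset (Fin 4)) = ({2, 3} : Finset (Fin 4)) := by decide
  have sd15 : symmDiff ({0, 3} : Finset (Fin 4)) ({0, 3} : Finset (Fin 4)) = (∅ : Finset (Fin 4)) := by decide
  have sd16 : symmDiff ({0, 3} : Finset (Fin 4)) ({1, 2} : Finset (Fin 4)) = ({0, 1, 2, 3} : Finset (Fin 4)) := by decide
  have sd17 : symmDiff ({1, 2} : Finset (Fin 4)) ({0, 1} : Finset (Fin 4)) = ({0, 2} : Finset (Fin 4)) := by decide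
  have sd18 : symmDiff ({1, 2} : Finset (Fin 4)) ({0, 2} : Finset (Fin 4)) = ({0, 1} : Finset (Fin 4)) := by decide
  have sd19 : symmDiff ({1, 2} : Finset (Fin 4)) ({0, 3} : Finset (Fin 4)) = ({0, 1, 2, 3} : Finset (Fin 4)) := by decide
  have sd20 : symmDiff ({1, 3} : Finset (Fin 4)) ({0, 1} : Finset (Fin 4)) = ({0, 3} : Finset (Fin 4)) := by decide
  have sd21 : symmDiff ({1, 3} : Finset (Fin 4)) ({0, 2} : Finset (Fin 4)) = ({0, 1, 2, 3} : Finset (Fin 4)) := by decide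
  have sd22 : symmDiff ({1, 3} : Finset (Fin 4)) ({0, 3} : Finset (Fin 4)) = ({0, 1} : Finset (Fin 4)) := by decide
  obtain ⟨z1, e1⟩ := hloc 1 2 1 2 (by decide) (by decide) (by decide) (by decide) (by decide) (by decide) (∅ : Finset (Fin 4)) (by unfold IsEvenConfig; decide)
  obtain ⟨z2, e2⟩ := hloc 1 2 1 2 (by decide) (by decide) (by decide) (by decide) (by decide) (by decide) ({0, 1} : Finset (Fin 4)) (by unfold IsEvenConfig; decide)
  obtain ⟨z3, e3⟩ := hloc 1 2 1 3 (by decide) (by decide) (by decide) (by decide) (by decide) (by decide) (∅ : Finset (Fin 4)) (by unfold IsEvenConfig; decide)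
  obtain ⟨z4, e4⟩ := hloc 1 3 1 2 (by decide) (by decide) (by decide) (by decide) (by decide) (by decide) (∅ : Finset (Fin 4)) (by unfold IsEvenConfig; decide)
  obtain ⟨z5, e5⟩ := hloc 1 3 1 2 (by decide) (by decide) (by decide) (by decide) (by decide) (by decide) ({0, 3} : Finset (Fin 4)) (by unfold IsEvenConfig; decide)
  obtain ⟨z6, e6⟩ := hloc 1 3 1 3 (by decide) (by decide) (by decide) (by decide) (by decide) (by decide) (∅ : Finset (Fin 4)) (by unfold IsEvenConfig; decide)
  obtain ⟨z7, e7⟩ := hloc 2 3 1 2 (by decide) (by decide) (by decide) (by decide) (by decide) (by decide) (∅ : Finset (Fin 4)) (by unfold IsEvenConfig; decide)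
  obtain ⟨z8, e8⟩ := hloc 2 3 1 2 (by decide) (by decide) (by decide) (by decide) (by decide) (by decide) ({0, 3} : Finset (Fin 4)) (by unfold IsEvenConfig; decide)
  obtain ⟨z9, e9⟩ := hloc 2 3 1 3 (by decide) (by decide) (by decide) (by decide) (by decide) (by decide) (∅ : Finset (Fin 4)) (by unfold IsEvenConfig; decide)
  simp only [commPhase, sd0, sd1, sd2, sd3, sd4, sd5, sd6, sd7, sd8, sd9, sd10, sd11, sd12, sd13, sd14, sd15, sd16, sd17, sd18, sd19, sd20, sd21, sd22] at e1 e2 e3 e4 e5 e6 e7 e8 e9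
  refine ⟨(1) * z1 + (1) * z2 + (2) * z3 + (-1) * z4 + (1) * z5 + (-2) * z6 + (1) * z7 + (1) * z8 + (2) * z9, ?_⟩
  push_cast
  linear_combination (1) * e1 + (1) * e2 + (2) * e3 + (-1) * e4 + (1) * e5 + (-2) * e6 + (1) * e7 + (1) * e8 + (2) * e9
end

section
/- Identify configurations with finite sets of unordered pairs (edges) on the vertex set {0,1,2,3,4}, added via symmetric difference Δ, and for i<j<k set ∂(ijk) := {{i,j},{j,k},{i,k}}. Let θ_{014} and θ_{023} be real-valued functions of configurations, and define K(a) := θ_{023}(a) + θ_{014}(a Δ ∂(023)) − θ_{023}(a Δ ∂(014)) − θ_{014}(a). Assume K(∂(012) Δ ∂(123)) ≡ K(∂(012)) (mod 2π), K(∂(024) Δ ∂(123) Δ ∂(124)) ≡ K(∂(024)) (mod 2π), and K(∂(034) Δ ∂(134)) ≡ K(∂(034)) (mod 2π). Then K(∂(012)) + K(∂(024)) + K(∂(034)) + K(∂(013)) ≡ 0 (mod 2π). -/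
/-- The boundary of the triangle `⟨i j k⟩`: the set of edges `{{i,j},{j,k},{i,k}}`
on the vertex set `{0,1,2,3,4}`. -/
def triBoundary (i j k : Fin 5) : Finset (Sym2 (Fin 5)) :=
  {s(i, j), s(j, k), s(i, k)}

/-- The commutator phase `K(a) = θ₀₂₃(a) + θ₀₁₄(a Δ ∂(023)) − θ₀₂₃(a Δ ∂(014)) − θ₀₁₄(a)`
of `[U₀₁₄, U₀₂₃]` acting on the loop configuration `a`. -/
noncomputable def loopCommPhase (θ014 θ023 : Finset (Sym2 (Fin 5)) → ℝ)
    (a : Finset (Sym2 (Fin 5))) : ℝ :=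
  θ023 a + θ014 (symmDiff a (triBoundary 0 2 3))
    - θ023 (symmDiff a (triBoundary 0 1 4)) - θ014 a

namespace FourPlaquetteAux

/-- `a = ∂013`. -/
def A : Finset (Sym2 (Fin 5)) := triBoundary 0 1 3
/-- `P = a Δ ∂014`. -/
def P : Finset (Sym2 (Fin 5)) := symmDiff A (triBoundary 0 1 4)
/-- `Q = a Δ ∂023`. -/
def Q : Finset (Sym2 (Fin 5)) := symmDiff A (triBoundary 0 2 3)
/-- `R = a Δ ∂014 Δ ∂023`. -/
def R : Finset (Sym2 (Fin 5)) := symmDiff P (triBoundary 0 2 3)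

lemma e1 : symmDiff (triBoundary 0 1 2) (triBoundary 1 2 3) = Q := by decide
lemma e2 : symmDiff (symmDiff (triBoundary 0 2 4) (triBoundary 1 2 3)) (triBoundary 1 2 4)
    = R := by decide
lemma e3 : symmDiff (triBoundary 0 3 4) (triBoundary 1 3 4) = P := by decide

lemma qB23 : symmDiff Q (triBoundary 0 2 3) = A := by decide
lemma qB14 : symmDiff Q (triBoundary 0 1 4) = R := by decide
lemma rB23 : symmDiff R (triBoundary 0 2 3) = P := by decide
lemma rB14 : symmDiff R (triBoundary 0 1 4) = Q := by decide
lemma pB23 : symmDiff P (triBoundary 0 2 3) = R := by decide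
lemma pB14 : symmDiff P (triBoundary 0 1 4) = A := by decide
lemma aB23 : symmDiff A (triBoundary 0 2 3) = Q := rfl
lemma aB14 : symmDiff A (triBoundary 0 1 4) = P := rfl

/-- The four commutator phases around the square `{a, aΔB14, aΔB23, aΔB14ΔB23}`
cancel exactly. -/
lemma sum_zero (θ014 θ023 : Finset (Sym2 (Fin 5)) → ℝ) :
    loopCommPhase θ014 θ023 Q + loopCommPhase θ014 θ023 R
      + loopCommPhase θ014 θ023 P + loopCommPhase θ014 θ023 A = 0 := by
  simp only [loopCommPhase, qB23, qB14, rB23, rB14, pB23, pB14, aB23, aB14]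
  ring

end FourPlaquetteAux

/-- The four-plaquette locality identity for `ℤ₂` loops in (3+1)D:
if `K(∂012 Δ ∂123) ≡ K(∂012)`, `K(∂024 Δ ∂123 Δ ∂124) ≡ K(∂024)` and
`K(∂034 Δ ∂134) ≡ K(∂034)` modulo `2π`, then
`K(∂012) + K(∂024) + K(∂034) + K(∂013) ≡ 0 (mod 2π)`. -/
theorem four_plaquette_locality_identity
    (θ014 θ023 : Finset (Sym2 (Fin 5)) → ℝ)
    (h1 : ∃ z : ℤ,
      loopCommPhase θ014 θ023 (symmDiff (triBoundary 0 1 2) (triBoundary 1 2 3))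
        - loopCommPhase θ014 θ023 (triBoundary 0 1 2) = 2 * Real.pi * z)
    (h2 : ∃ z : ℤ,
      loopCommPhase θ014 θ023
          (symmDiff (symmDiff (triBoundary 0 2 4) (triBoundary 1 2 3)) (triBoundary 1 2 4))
        - loopCommPhase θ014 θ023 (triBoundary 0 2 4) = 2 * Real.pi * z)
    (h3 : ∃ z : ℤ,
      loopCommPhase θ014 θ023 (symmDiff (triBoundary 0 3 4) (triBoundary 1 3 4))
        - loopCommPhase θ014 θ023 (triBoundary 0 3 4) = 2 * Real.pi * z) :
    ∃ z : ℤ,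
      loopCommPhase θ014 θ023 (triBoundary 0 1 2)
        + loopCommPhase θ014 θ023 (triBoundary 0 2 4)
        + loopCommPhase θ014 θ023 (triBoundary 0 3 4)
        + loopCommPhase θ014 θ023 (triBoundary 0 1 3) = 2 * Real.pi * z := by
  obtain ⟨z1, h1⟩ := h1
  obtain ⟨z2, h2⟩ := h2
  obtain ⟨z3, h3⟩ := h3
  rw [FourPlaquetteAux.e1] at h1
  rw [FourPlaquetteAux.e2] at h2
  rw [FourPlaquetteAux.e3] at h3
  have hsum := FourPlaquetteAux.sum_zero θ014 θ023
  have hA : triBoundary 0 1 3 = FourPlaquetteAux.A := rfl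
  rw [hA]
  refine ⟨-(z1 + z2 + z3), ?_⟩
  push_cast
  linarith
end

section
/- Let C be the group of even-cardinality subsets of {0,1,2,3} under symmetric difference Δ, and let θ : {1,2,3} × C → ℝ, written θ_i(a). Suppose that θ_j({0,l}) = θ_j({0,m}) whenever j, l, m ∈ {1,2,3} are distinct. Then the T-junction phase Θ := θ_3({0,2}) − θ_2({0,3}) + θ_1({0,3}) − θ_3({0,1}) + θ_2({0,1}) − θ_1({0,2}) equals 0. -/
/-- Let `θ_i(a)` be the hopping phases on the even-cardinality
configurations of `ℤ₂` particles on four points `0,1,2,3`.  If the hopping phase is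
independent of the position of the spectator particle, i.e.
`θ_j({0,l}) = θ_j({0,m})` whenever `j, l, m ∈ {1,2,3}` are distinct, then the
T-junction phase
`Θ = θ₃({0,2}) − θ₂({0,3}) + θ₁({0,3}) − θ₃({0,1}) + θ₂({0,1}) − θ₁({0,2})`
vanishes. -/
theorem tjunction_phase_zero_of_spectator_independence
    (θ : Fin 4 → Finset (Fin 4) → ℝ)
    (h : ∀ j l m : Fin 4, j ≠ 0 → l ≠ 0 → m ≠ 0 → j ≠ l → j ≠ m → l ≠ m →
      θ j {0, l} = θ j {0, m}) :
    θ 3 {0, 2} - θ 2 {0, 3} + θ 1 {0, 3} - θ 3 {0, 1} + θ 2 {0, 1} - θ 1 {0, 2} = 0 := by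
  have h3 := h 3 2 1 (by decide) (by decide) (by decide) (by decide) (by decide) (by decide)
  have h2 := h 2 3 1 (by decide) (by decide) (by decide) (by decide) (by decide) (by decide)
  have h1 := h 1 3 2 (by decide) (by decide) (by decide) (by decide) (by decide) (by decide)
  linarith
end

section
/- Let S be a finite set and A a finite abelian group. Let ε : S × A → ℤ satisfy Σ_{a∈A} ε(s,a) = 0 for every s ∈ S, and let θ : S × A → ℝ be a function such that for every a₀ ∈ A the shifted-difference evaluation Σ_{s∈S} Σ_{a∈A} ε(s,a)·(θ(s,a) − θ(s, a + a₀)) lies in 2πℤ. Then |A| · Σ_{s∈S} Σ_{a∈A} ε(s,a)·θ(s,a) lies in 2πℤ; equivalently, exp(i·Σ_{s,a} ε(s,a)θ(s,a)) is an |A|-th root of unity. -/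
/-- Let `S` be a finite set and `A` a finite abelian group.  Suppose
`ε : S × A → ℤ` satisfies `∑ a, ε (s, a) = 0` for every `s`, and `θ : S × A → ℝ` is
such that for every `a₀ ∈ A` the shifted-difference evaluation
`∑ s, ∑ a, ε (s, a) * (θ (s, a) − θ (s, a + a₀))` lies in `2πℤ`.  Then
`|A| * ∑ s, ∑ a, ε (s, a) * θ (s, a)` lies in `2πℤ`; equivalently,
`exp (i ∑ ε θ)` is an `|A|`-th root of unity. -/
theorem berry_phase_quantized
    {S A : Type*} [Fintype S] [Fintype A] [AddCommGroup A]
    (ε : S × A → ℤ) (θ : S × A → ℝ)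
    (hε : ∀ s : S, ∑ a : A, ε (s, a) = 0)
    (hθ : ∀ a₀ : A, ∃ k : ℤ,
      ∑ s : S, ∑ a : A, (ε (s, a) : ℝ) * (θ (s, a) - θ (s, a + a₀))
        = 2 * Real.pi * k) :
    ∃ k : ℤ,
      (Fintype.card A : ℝ) * ∑ s : S, ∑ a : A, (ε (s, a) : ℝ) * θ (s, a)
        = 2 * Real.pi * k := by
  choose k hk using hθ
  refine ⟨∑ a₀ : A, k a₀, ?_⟩
  have hsum : ∑ a₀ : A, ∑ s : S, ∑ a : A,
      (ε (s, a) : ℝ) * (θ (s, a) - θ (s, a + a₀))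
      = 2 * Real.pi * (∑ a₀ : A, k a₀) := by
    push_cast
    rw [Finset.mul_sum]
    exact Finset.sum_congr rfl fun a₀ _ => hk a₀
  rw [← hsum]
  symm
  have : ∀ s : S, ∑ a₀ : A, ∑ a : A,
      (ε (s, a) : ℝ) * (θ (s, a) - θ (s, a + a₀))
      = (Fintype.card A : ℝ) * ∑ a : A, (ε (s, a) : ℝ) * θ (s, a) := by
    intro s
    have h1 : ∀ a : A, ∑ a₀ : A, θ (s, a + a₀) = ∑ b : A, θ (s, b) := fun a =>
      Fintype.sum_equiv (Equiv.addLeft a) _ _ fun a₀ => rfl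
    rw [Finset.sum_comm]
    simp only [mul_sub, Finset.sum_sub_distrib, ← Finset.mul_sum, h1]
    have h2 : ∑ a : A, (ε (s, a) : ℝ) * ∑ b : A, θ (s, b)
        = 0 := by
      rw [← Finset.sum_mul, ← Int.cast_sum, hε s, Int.cast_zero, zero_mul]
    rw [h2, sub_zero, Finset.mul_sum]
    exact Finset.sum_congr rfl fun a _ => by
      simp [Finset.sum_const, nsmul_eq_mul]; ring
  calc ∑ a₀ : A, ∑ s : S, ∑ a : A, (ε (s, a) : ℝ) * (θ (s, a) - θ (s, a + a₀))
      = ∑ s : S, ∑ a₀ : A, ∑ a : A, (ε (s, a) : ℝ) * (θ (s, a) - θ (s, a + a₀)) :=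
        Finset.sum_comm
    _ = ∑ s : S, (Fintype.card A : ℝ) * ∑ a : A, (ε (s, a) : ℝ) * θ (s, a) :=
        Finset.sum_congr rfl fun s _ => this s
    _ = (Fintype.card A : ℝ) * ∑ s : S, ∑ a : A, (ε (s, a) : ℝ) * θ (s, a) :=
        (Finset.mul_sum ..).symm
end
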